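/- For ψ₁ ψ₂ : ℝ → Prop, the statement [∃δ ≥ 0, ψ₂ δ ∧ ∀δ', 0 ≤ δ' < δ → ψ₁ δ'] holds if and only if there exists a nonempty set Φ ⊆ {δ | δ ≥ 0} such that (i) ψ₂ δ for every δ ∈ Φ, (ii) ψ₁ δ for every δ ≥ 0 belonging to pred_<(Φ) = {δ | ∃δ'' ∈ Φ, δ < δ''}, and (iii) 0 ∈ pred(Φ) = Φ ∪ pred_<(Φ). (Soundness and completeness of the placeholder proof rule ∃_{r1} for ∃(ψ₁ ▷ ψ₂).) -/
import Mathlib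


/-- Strict time-predecessors of a set of time points. -/
def predLt (Φ : Set ℝ) : Set ℝ := {δ : ℝ | ∃ δ'' ∈ Φ, δ < δ''}

/-- Non-strict time-predecessors. -/
def pred (Φ : Set ℝ) : Set ℝ := Φ ∪ predLt Φ

theorem stmt_10 (ψ₁ ψ₂ : ℝ → Prop) :
    (∃ δ : ℝ, 0 ≤ δ ∧ ψ₂ δ ∧ ∀ δ' : ℝ, 0 ≤ δ' → δ' < δ → ψ₁ δ') ↔
      (∃ Φ : Set ℝ, Φ.Nonempty ∧ Φ ⊆ {δ : ℝ | 0 ≤ δ} ∧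
        (∀ δ ∈ Φ, ψ₂ δ) ∧
        (∀ δ : ℝ, 0 ≤ δ → δ ∈ predLt Φ → ψ₁ δ) ∧
        (0 : ℝ) ∈ pred Φ) := by
  constructor
  · rintro ⟨δ, hδ, h2, h1⟩
    refine ⟨{δ}, ⟨δ, rfl⟩, ?_, ?_, ?_, ?_⟩
    · intro x hx; simp at hx; simpa [hx]
    · intro x hx; simp at hx; simpa [hx]
    · rintro x hx ⟨y, hy, hxy⟩
      simp at hy; exact h1 x hx (hy ▸ hxy)
    · rcases eq_or_lt_of_le hδ with h | h
      · exact Or.inl (by simp [← h])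
      · exact Or.inr ⟨δ, rfl, h⟩
  · rintro ⟨Φ, hne, hsub, h2, h1, h0⟩
    rcases h0 with h0 | ⟨δ, hδ, hpos⟩
    · exact ⟨0, le_refl 0, h2 0 h0, fun δ' h h' => absurd h' (not_lt.mpr h)⟩
    · exact ⟨δ, le_of_lt hpos, h2 δ hδ, fun δ' h h' => h1 δ' h ⟨δ, hδ, h'⟩⟩
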